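/- For every square-free word w over {0,1,2} and any two distinct letters a,b in {0,1,2}, the image h(ab) under the morphism h(0)=10, h(1)=32, h(2)=1230103012 is reduced; consequently h maps every square-free word over {0,1,2} to a reduced word over {0,1,2,3}. -/

import Mathlib

/-!
A word avoids a set of two-letter factors iff each pair of consecutive letters is allowed, so
reducedness is a chain condition. A square-free word has no two equal consecutive letters, each
`h a` is reduced, and for `a ≠ b` the junction of `h a` and `h b` is allowed (a finite check);
the chain condition therefore passes from `w` to `w.flatMap h`.
-/

def SqFree {α : Type*} (w : List α) : Prop :=
  ∀ v : List α, v ≠ [] → ¬ (v ++ v) <:+: w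

def Reduced (w : List (Fin 4)) : Prop :=
  ∀ p ∈ ([[0,2],[2,0],[1,3],[3,1]] : List (List (Fin 4))), ¬ p <:+: w

def DeanWord (w : List (Fin 4)) : Prop := Reduced w ∧ SqFree w

def IFactor {α : Type*} (v : List α) (w : ℕ → α) : Prop :=
  ∃ i, v = (List.range v.length).map fun k => w (i + k)

def ISqFree {α : Type*} (w : ℕ → α) : Prop :=
  ∀ v : List α, v ≠ [] → ¬ IFactor (v ++ v) w

def IReduced (w : ℕ → Fin 4) : Prop :=
  ∀ p ∈ ([[0,2],[2,0],[1,3],[3,1]] : List (List (Fin 4))), ¬ IFactor p w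

def IDean (w : ℕ → Fin 4) : Prop := IReduced w ∧ ISqFree w

def h : Fin 3 → List (Fin 4) := ![[1,0],[3,2],[1,2,3,0,1,0,3,0,1,2]]

open List

theorem List.isChain_iff_forall_not_infix {α : Type*} {F : List (List α)}
    (hF : ∀ p ∈ F, p.length = 2) {w : List α} :
    IsChain (fun x y => [x, y] ∉ F) w ↔ ∀ p ∈ F, ¬ p <:+: w := by
  rw [isChain_iff_forall_rel_of_append_cons_cons]
  constructor
  · rintro hw p hp ⟨s, t, rfl⟩
    match p, hF p hp with
    | [x, y], _ => exact hw (l₁ := s) (l₂ := t) (by simp) hp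
  · rintro hw x y s t rfl hxy
    exact hw _ hxy ⟨s, t, by simp⟩

theorem List.isChain_flatMap {α β : Type*} {R : β → β → Prop} {S : α → α → Prop}
    {f : α → List β} (hne : ∀ a, f a ≠ []) (hf : ∀ a, IsChain R (f a))
    (hS : ∀ a b, S a b → ∀ x ∈ (f a).getLast?, ∀ y ∈ (f b).head?, R x y)
    {w : List α} (hw : IsChain S w) : IsChain R (w.flatMap f) := by
  rw [flatMap_def, isChain_flatten (by simpa using fun a _ => (hne a).symm),
    isChain_map]
  exact ⟨by simpa using fun a _ => hf a, hw.imp hS⟩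

theorem SqFree.isChain_ne {α : Type*} {w : List α} (hw : SqFree w) : IsChain (· ≠ ·) w := by
  rw [isChain_iff_forall_rel_of_append_cons_cons]
  rintro a b s t rfl rfl
  exact hw [a] (cons_ne_nil _ _) ⟨s, t, by simp⟩

theorem reduced_iff_isChain {w : List (Fin 4)} :
    Reduced w ↔
      IsChain (fun x y => [x, y] ∉ ([[0,2],[2,0],[1,3],[3,1]] : List (List (Fin 4)))) w :=
  (isChain_iff_forall_not_infix (by decide)).symm

theorem reduced_h (a : Fin 3) : Reduced (h a) := by
  unfold Reduced; revert a; decide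

theorem reduced_h_append_h : ∀ a b : Fin 3, a ≠ b → Reduced (h a ++ h b) := by
  unfold Reduced; decide

theorem stmt5 :
    (∀ a b : Fin 3, a ≠ b → Reduced (h a ++ h b)) ∧
    (∀ w : List (Fin 3), SqFree w → Reduced (w.flatMap h)) := by
  refine ⟨reduced_h_append_h, fun w hw => reduced_iff_isChain.2 ?_⟩
  refine isChain_flatMap (fun a => by fin_cases a <;> simp [h])
    (fun a => reduced_iff_isChain.1 (reduced_h a)) (fun a b hab => ?_) hw.isChain_ne
  exact (isChain_append.1 (reduced_iff_isChain.1 (reduced_h_append_h a b hab))).2.2
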